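/- For n ≡ 0 (mod 3), n ≥ 9, the graph D(n) admits a Hamilton cycle; explicitly, with C(m) (m = n/3) the graph built from m six-cycle segments on vertices u_i^1,u_i^2,u_i^3,u_i^4,v_i^1,v_i^2 linked by edges v_{i-1}^1u_i^1, v_{i-1}^2u_i^4, u_{i-1}^3u_i^2, and with closing edges u_1^1v_m^1, u_1^4v_m^2, u_1^2u_m^3, the concatenation of the paths L_i^1 = u_i^1 u_i^2 u_i^3 u_i^4 v_i^2 v_i^1 for i = 1,…,m, closed by the edge v_m^1u_1^1, is a Hamilton cycle of D(n). -/
import Mathlib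


open SimpleGraph

/-- A 2-factor of `G`: a spanning subgraph in which every vertex has degree exactly 2. -/
def SimpleGraph.IsTwoFactor {V : Type*} (G F : SimpleGraph V) : Prop :=
  F ≤ G ∧ ∀ v : V, (F.neighborSet v).ncard = 2

/-- The number of cycles of a 2-factor, i.e. its number of connected components. -/
noncomputable def SimpleGraph.numCycles {V : Type*} (F : SimpleGraph V) : ℕ :=
  Nat.card F.ConnectedComponent

/-- A graph is pseudo 2-factor isomorphic if all its 2-factors have the same
parity of number of cycles. -/
def SimpleGraph.PseudoTwoFactorIsomorphic {V : Type*} (G : SimpleGraph V) : Prop :=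
  ∀ F₁ F₂ : SimpleGraph V, G.IsTwoFactor F₁ → G.IsTwoFactor F₂ →
    F₁.numCycles % 2 = F₂.numCycles % 2

/-- `C(m)`: vertex `(i, a)` with `a = 0,1,2,3` for `u_i^1,…,u_i^4`, `a = 4` for
`v_i^1`, `a = 5` for `v_i^2`. Each segment is the 6-cycle
`u_i^1 u_i^2 u_i^3 u_i^4 v_i^2 v_i^1`, and consecutive segments are linked by the
edges `v_{i-1}^1 u_i^1`, `v_{i-1}^2 u_i^4`, `u_{i-1}^3 u_i^2`. -/
def Cgraph (m : ℕ) : SimpleGraph (Fin m × Fin 6) :=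
  SimpleGraph.fromRel fun p q =>
    (p.1 = q.1 ∧
      (p.2, q.2) ∈ [((0 : Fin 6), (1 : Fin 6)), (1, 2), (2, 3), (3, 5), (5, 4), (4, 0)]) ∨
    ((p.1 : ℕ) + 1 = (q.1 : ℕ) ∧
      ((p.2 = 4 ∧ q.2 = 0) ∨ (p.2 = 5 ∧ q.2 = 3) ∨ (p.2 = 2 ∧ q.2 = 1)))

/-- `D(3m)`: `C(m)` with the closing edges `u_1^1 v_m^1`, `u_1^4 v_m^2`, `u_1^2 u_m^3`. -/
def Dgraph (m : ℕ) : SimpleGraph (Fin m × Fin 6) :=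
  SimpleGraph.fromRel fun p q =>
    (Cgraph m).Adj p q ∨
    ((p.1 : ℕ) = m - 1 ∧ (q.1 : ℕ) = 0 ∧
      ((p.2 = 4 ∧ q.2 = 0) ∨ (p.2 = 5 ∧ q.2 = 3) ∨ (p.2 = 2 ∧ q.2 = 1)))

/-- The subgraph formed by the paths `L_i^1 = u_i^1 u_i^2 u_i^3 u_i^4 v_i^2 v_i^1`,
the linking edges `v_i^1 u_{i+1}^1`, and the closing edge `v_m^1 u_1^1`. -/
def Hcycle (m : ℕ) : SimpleGraph (Fin m × Fin 6) :=
  SimpleGraph.fromRel fun p q =>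
    (p.1 = q.1 ∧
      (p.2, q.2) ∈ [((0 : Fin 6), (1 : Fin 6)), (1, 2), (2, 3), (3, 5), (5, 4)]) ∨
    ((p.1 : ℕ) + 1 = (q.1 : ℕ) ∧ p.2 = 4 ∧ q.2 = 0) ∨
    ((p.1 : ℕ) = m - 1 ∧ (q.1 : ℕ) = 0 ∧ p.2 = 4 ∧ q.2 = 0)

def Hrel (m : ℕ) (p q : Fin m × Fin 6) : Prop :=
  (p.1 = q.1 ∧
    (p.2, q.2) ∈ [((0 : Fin 6), (1 : Fin 6)), (1, 2), (2, 3), (3, 5), (5, 4)]) ∨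
  ((p.1 : ℕ) + 1 = (q.1 : ℕ) ∧ p.2 = 4 ∧ q.2 = 0) ∨
  ((p.1 : ℕ) = m - 1 ∧ (q.1 : ℕ) = 0 ∧ p.2 = 4 ∧ q.2 = 0)

def hEquiv (m : ℕ) : Fin m × Fin 6 ≃ Fin (m * 6) :=
  ((Equiv.refl (Fin m)).prodCongr (Equiv.swap (4 : Fin 6) 5)).trans finProdFinEquiv

def sval : Fin 6 → ℕ
  | 0 => 0 | 1 => 1 | 2 => 2 | 3 => 3 | 4 => 5 | 5 => 4

lemma hEquiv_val {m : ℕ} (i : Fin m) (a : Fin 6) :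
    ((hEquiv m (i, a)) : ℕ) = 6 * (i : ℕ) + sval a := by
  fin_cases a <;> simp [hEquiv, sval, Equiv.swap_apply_def] <;> omega

def nv : Fin 6 → Fin 6
  | 0 => 1 | 1 => 2 | 2 => 3 | 3 => 5 | 4 => 0 | 5 => 4

def nxt {m : ℕ} (p : Fin m × Fin 6) : Fin m × Fin 6 :=
  if p.2 = 4 then (⟨((p.1 : ℕ) + 1) % m, Nat.mod_lt _ p.1.pos⟩, 0)
  else (p.1, nv p.2)

lemma nxt_rel {m : ℕ} (p : Fin m × Fin 6) : Hrel m p (nxt p) := by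
  obtain ⟨i, a⟩ := p
  by_cases h : a = 4
  · subst h
    simp only [nxt, if_pos rfl]
    by_cases hi : (i : ℕ) + 1 < m
    · right; left
      refine ⟨?_, rfl, rfl⟩
      simp [Nat.mod_eq_of_lt hi]
    · right; right
      have him : (i : ℕ) + 1 = m := by omega
      refine ⟨by simp; omega, ?_, rfl, rfl⟩
      simp [him]
  · simp only [nxt, if_neg h]
    left
    refine ⟨rfl, ?_⟩
    fin_cases a <;> simp [nv] at h ⊢

lemma fwd {m : ℕ} (hm : 3 ≤ m) {p q : Fin m × Fin 6} (h : Hrel m p q) :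
    ((hEquiv m q) : ℕ) = (((hEquiv m p) : ℕ) + 1) % (m * 6) := by
  obtain ⟨i, a⟩ := p
  obtain ⟨j, b⟩ := q
  have hj := j.isLt
  have hi := i.isLt
  rw [hEquiv_val, hEquiv_val]
  rcases h with ⟨hij, hab⟩ | ⟨hij, ha, hb⟩ | ⟨hi1, hj1, ha, hb⟩
  · have hij' : (i : ℕ) = (j : ℕ) := by rw [show i = j from hij]
    simp only [List.mem_cons, List.mem_singleton, List.not_mem_nil, or_false,
      Prod.mk.injEq] at hab
    rcases hab with ⟨ha, hb⟩ | ⟨ha, hb⟩ | ⟨ha, hb⟩ | ⟨ha, hb⟩ | ⟨ha, hb⟩ <;>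
      subst ha <;> subst hb <;>
      · simp only [sval]
        rw [Nat.mod_eq_of_lt (by omega)]
        omega
  · simp only at hij ha hb
    subst ha; subst hb
    simp only [sval]
    rw [Nat.mod_eq_of_lt (by omega)]
    omega
  · simp only at hi1 hj1 ha hb
    subst ha; subst hb
    simp only [sval]
    have h6 : 6 * (i : ℕ) + 5 + 1 = m * 6 := by omega
    rw [h6, Nat.mod_self]
    omega

lemma bwd {m : ℕ} (hm : 3 ≤ m) {p q : Fin m × Fin 6}
    (h : ((hEquiv m q) : ℕ) = (((hEquiv m p) : ℕ) + 1) % (m * 6)) : Hrel m p q := by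
  have h2 := fwd hm (nxt_rel p)
  have : hEquiv m q = hEquiv m (nxt p) := Fin.ext (by rw [h, h2])
  have hq : q = nxt p := (hEquiv m).injective this
  rw [hq]
  exact nxt_rel p

lemma sub_val_one {n : ℕ} (hn : 2 ≤ n) (u v : Fin n) :
    ((v - u) : Fin n).val = 1 ↔ (v : ℕ) = ((u : ℕ) + 1) % n := by
  obtain ⟨k, rfl⟩ : ∃ k, n = k + 2 := ⟨n - 2, by omega⟩
  constructor
  · intro h
    have h1 : v - u = 1 := Fin.ext (by rw [h, Fin.val_one])
    have hv : v = u + 1 := by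
      rw [sub_eq_iff_eq_add] at h1; rw [h1]; exact add_comm 1 u
    rw [hv, Fin.val_add, Fin.val_one]
  · intro h
    have hv : v = u + 1 := Fin.ext (by rw [h, Fin.val_add, Fin.val_one])
    rw [hv, add_sub_cancel_left, Fin.val_one]

lemma cg_deg (n : ℕ) (hn : 3 ≤ n) (v : Fin n) :
    ((SimpleGraph.cycleGraph n).neighborSet v).ncard = 2 := by
  obtain ⟨k, rfl⟩ : ∃ k, n = k + 3 := ⟨n - 3, by omega⟩
  rw [Set.ncard_eq_toFinset_card']
  have h : ((cycleGraph (k + 3)).neighborSet v).toFinset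
      = (cycleGraph (k + 3)).neighborFinset v := rfl
  rw [h]
  exact cycleGraph_degree_three_le

lemma cg_conn (n : ℕ) (hn : 1 ≤ n) : (SimpleGraph.cycleGraph n).Connected := by
  obtain ⟨k, rfl⟩ : ∃ k, n = k + 1 := ⟨n - 1, by omega⟩
  exact cycleGraph_connected

/-- For `n = 3m ≡ 0 (mod 3)`, `n ≥ 9`, the closed concatenation
`(L_1^1 L_2^1 ⋯ L_m^1 u_1^1)` is a Hamilton cycle of `D(n)`: it is a connected
spanning 2-regular subgraph. In particular `D(n)` admits a Hamilton cycle. -/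
theorem Dgraph_hamilton_cycle (m : ℕ) (hm : 3 ≤ m) :
    (Dgraph m).IsTwoFactor (Hcycle m) ∧ (Hcycle m).Connected := by
  have hn6 : 3 ≤ m * 6 := by omega
  have hadj : ∀ p q, (Hcycle m).Adj p q ↔
      (cycleGraph (m * 6)).Adj (hEquiv m p) (hEquiv m q) := by
    intro p q
    rw [Hcycle, fromRel_adj, cycleGraph_adj',
      sub_val_one (by omega) (hEquiv m q) (hEquiv m p),
      sub_val_one (by omega) (hEquiv m p) (hEquiv m q)]
    have hne1 : ∀ a b : Fin m × Fin 6,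
        ((hEquiv m b) : ℕ) = (((hEquiv m a) : ℕ) + 1) % (m * 6) → a ≠ b := by
      intro a b h hab
      subst hab
      have hx := (hEquiv m a).isLt
      rcases Nat.lt_or_ge (((hEquiv m a) : ℕ) + 1) (m * 6) with h1 | h1
      · rw [Nat.mod_eq_of_lt h1] at h; omega
      · have h2 : ((hEquiv m a) : ℕ) + 1 = m * 6 := by omega
        rw [h2, Nat.mod_self] at h; omega
    constructor
    · rintro ⟨hne, h | h⟩
      · right; exact fwd hm h
      · left; exact fwd hm h
    · rintro (h | h)
      · exact ⟨(hne1 _ _ h).symm, Or.inr (bwd hm h)⟩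
      · exact ⟨hne1 _ _ h, Or.inl (bwd hm h)⟩
  let φ : Hcycle m ≃g cycleGraph (m * 6) := ⟨hEquiv m, fun {p q} => (hadj p q).symm⟩
  have hCrel : ∀ p q : Fin m × Fin 6, p ≠ q → Hrel m p q →
      ((Cgraph m).Adj p q ∨
        ((p.1 : ℕ) = m - 1 ∧ (q.1 : ℕ) = 0 ∧
          ((p.2 = 4 ∧ q.2 = 0) ∨ (p.2 = 5 ∧ q.2 = 3) ∨ (p.2 = 2 ∧ q.2 = 1)))) := by
    intro p q hne h
    rcases h with ⟨hij, hab⟩ | ⟨hij, ha, hb⟩ | ⟨h1, h2, ha, hb⟩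
    · left
      rw [Cgraph, fromRel_adj]
      refine ⟨hne, Or.inl (Or.inl ⟨hij, ?_⟩)⟩
      simp only [List.mem_cons, List.mem_singleton, List.not_mem_nil, or_false] at hab ⊢
      tauto
    · left
      rw [Cgraph, fromRel_adj]
      exact ⟨hne, Or.inl (Or.inr ⟨hij, Or.inl ⟨ha, hb⟩⟩)⟩
    · right
      exact ⟨h1, h2, Or.inl ⟨ha, hb⟩⟩
  refine ⟨⟨?_, ?_⟩, ?_⟩
  · -- Hcycle ≤ Dgraph
    intro p q h
    rw [Hcycle, fromRel_adj] at h
    rw [Dgraph, fromRel_adj]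
    obtain ⟨hne, h | h⟩ := h
    · exact ⟨hne, Or.inl (hCrel p q hne h)⟩
    · exact ⟨hne, Or.inr (hCrel q p hne.symm h)⟩
  · -- degree 2
    intro v
    have hc := Nat.card_congr (φ.mapNeighborSet v)
    rw [Nat.card_coe_set_eq, Nat.card_coe_set_eq] at hc
    rw [hc]
    exact cg_deg (m * 6) hn6 _
  · -- connected
    rw [φ.connected_iff]
    exact cg_conn (m * 6) (by omega)
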